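/- arXiv:1603.04350 — 2 statements merged into one kernel-verified Lean document; each statement's English description precedes it below -/
import Mathlib

section
/- Let f : C → R^d be an affine map on a convex set C ⊆ R^d with ‖f(x) − x‖ ≤ d for all x ∈ C. If the ball B of radius R > d centered at a point p is contained in C, then p ∈ f(B). -/
/-!
Suppose `p ∉ f '' B`, where `B` is the closed ball of radius `R` about `p`. The image is compact
and convex, so some `v` strictly separates it from `p`: `⟪v, f x⟫ < ⟪v, p⟫` on `B`. At the point
`g ∈ B` farthest from `p` in the direction `v` we get
`R ‖v‖ = ⟪v, g - p⟫ < ⟪v, g - f g⟫ ≤ ‖v‖ ‖g - f g‖`, so `f` moves `g` by more than `R`.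
-/

open Metric RealInnerProductSpace

variable {E : Type*} [NormedAddCommGroup E] [InnerProductSpace ℝ E]

theorem exists_inner_lt_inner_of_notMem [CompleteSpace E] {s : Set E} {x : E}
    (hs : Convex ℝ s) (hsc : IsClosed s) (hx : x ∉ s) :
    ∃ v : E, ∀ y ∈ s, ⟪v, y⟫ < ⟪v, x⟫ := by
  obtain ⟨φ, u, hlt, hu⟩ := geometric_hahn_banach_closed_point hs hsc hx
  refine ⟨(InnerProductSpace.toDual ℝ E).symm φ, fun y hy => ?_⟩
  simp only [InnerProductSpace.toDual_symm_apply]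
  exact (hlt y hy).trans hu

theorem exists_mem_closedBall_inner_sub_eq (p v : E) {R : ℝ} (hR : 0 ≤ R) :
    ∃ g ∈ closedBall p R, ⟪v, g - p⟫ = R * ‖v‖ := by
  rcases eq_or_ne v 0 with rfl | hv
  · exact ⟨p, mem_closedBall_self hR, by simp⟩
  have hv' : 0 < ‖v‖ := norm_pos_iff.mpr hv
  refine ⟨p + (R / ‖v‖) • v, ?_, ?_⟩
  · rw [mem_closedBall, dist_eq_norm, add_sub_cancel_left, norm_smul, Real.norm_eq_abs,
      abs_of_nonneg (by positivity), div_mul_cancel₀ _ hv'.ne']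
  · rw [add_sub_cancel_left, real_inner_smul_right, real_inner_self_eq_norm_sq]
    field_simp

theorem AffineMap.mem_image_closedBall_of_norm_sub_le [FiniteDimensional ℝ E]
    (f : E →ᵃ[ℝ] E) {p : E} {R : ℝ} (hR : 0 ≤ R)
    (hf : ∀ x ∈ closedBall p R, ‖f x - x‖ ≤ R) :
    p ∈ f '' closedBall p R := by
  by_contra hp
  have hK : IsCompact (f '' closedBall p R) :=
    (isCompact_closedBall p R).image f.continuous_of_finiteDimensional
  obtain ⟨v, hv⟩ :=
    exists_inner_lt_inner_of_notMem ((convex_closedBall p R).affine_image f) hK.isClosed hp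
  obtain ⟨g, hg, hvg⟩ := exists_mem_closedBall_inner_sub_eq p v hR
  have hsep := hv (f g) (Set.mem_image_of_mem f hg)
  have : R * ‖v‖ < ‖v‖ * R :=
    calc R * ‖v‖ = ⟪v, g - p⟫ := hvg.symm
      _ < ⟪v, g - f g⟫ := by rw [inner_sub_right, inner_sub_right]; linarith
      _ ≤ ‖v‖ * ‖g - f g‖ := real_inner_le_norm v _
      _ ≤ ‖v‖ * R := by
        gcongr
        rw [norm_sub_rev]
        exact hf g hg
  linarith

theorem affine_near_identity_image_contains_center_general (d : ℕ)
    (C : Set (EuclideanSpace ℝ (Fin d)))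
    (f : EuclideanSpace ℝ (Fin d) →ᵃ[ℝ] EuclideanSpace ℝ (Fin d))
    (hf : ∀ x ∈ C, ‖f x - x‖ ≤ (d : ℝ))
    (p : EuclideanSpace ℝ (Fin d)) (R : ℝ) (hR : (d : ℝ) < R)
    (hB : Metric.closedBall p R ⊆ C) :
    p ∈ f '' Metric.closedBall p R :=
  f.mem_image_closedBall_of_norm_sub_le ((Nat.cast_nonneg d).trans hR.le)
    fun x hx => (hf x (hB hx)).trans hR.le

theorem affine_near_identity_image_contains_center (d : ℕ)
    (C : Set (EuclideanSpace ℝ (Fin d))) (hC : Convex ℝ C)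
    (f : EuclideanSpace ℝ (Fin d) →ᵃ[ℝ] EuclideanSpace ℝ (Fin d))
    (hf : ∀ x ∈ C, ‖f x - x‖ ≤ (d : ℝ))
    (p : EuclideanSpace ℝ (Fin d)) (R : ℝ) (hd : 0 < d) (hR : (d : ℝ) < R)
    (hB : Metric.closedBall p R ⊆ C) :
    p ∈ f '' Metric.closedBall p R :=
  affine_near_identity_image_contains_center_general d C f hf p R hR hB
end

section
/- Carathéodory-type theorem for function values: let f : S → R for a finite set S ⊆ R^d, and suppose x = Σ_{i=1}^m λ_i p_i with p_i ∈ S, λ ∈ simplex, and Σ λ_i f(p_i) < c. Then there exist at most d+1 points q_1,...,q_{d+1} ∈ S and weights μ ∈ simplex with x = Σ μ_j q_j and Σ μ_j f(q_j) ≤ Σ λ_i f(p_i) < c. -/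
/-!
Eliminate points one at a time. More than `finrank E + 1` points are affinely dependent, and an
affine relation `g` (`∑ g i = 0`, `∑ g i • p i = 0`) can be subtracted from the weights,
`w ↦ w - t • g`, without changing their total or their barycenter. Choosing the sign of `g` so that
`∑ g i * v i ≥ 0`, the value `∑ w i * v i` does not increase for `t ≥ 0`, and the largest `t` that
keeps the weights nonnegative makes one of them vanish.
-/

open Finset Module

theorem sum_extend_smul_invFun {R ι κ M : Type*} [Semiring R] [Fintype ι] [Nonempty ι]
    [Fintype κ] [AddCommMonoid M] [Module R M] {e : ι → κ} (he : e.Injective) (w : ι → R)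
    (F : ι → M) :
    ∑ j, Function.extend e w 0 j • F (Function.invFun e j) = ∑ i, w i • F i := by
  refine (Fintype.sum_of_injective e he _ _ (fun j hj => ?_) fun i => ?_).symm
  · rw [Function.extend_apply' _ _ _ hj, Pi.zero_apply, zero_smul]
  · rw [he.extend_apply, Function.leftInverse_invFun he]

theorem Fin.sum_univ_succAbove_of_eq_zero {M : Type*} [AddCommMonoid M] {m : ℕ}
    {F : Fin (m + 1) → M} {i₀ : Fin (m + 1)} (h : F i₀ = 0) :
    ∑ i, F (i₀.succAbove i) = ∑ i, F i := by
  rw [Fin.sum_univ_succAbove F i₀, h, zero_add]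

theorem AffineIndependent.card_le_finrank_succ_of_finiteDimensional {k V ι : Type*}
    [DivisionRing k] [AddCommGroup V] [Module k V] [FiniteDimensional k V] [Fintype ι]
    {p : ι → V} (hp : AffineIndependent k p) :
    Fintype.card ι ≤ finrank k V + 1 :=
  hp.card_le_finrank_succ.trans (Nat.succ_le_succ (Submodule.finrank_le _))

variable {𝕜 E ι : Type*} [Field 𝕜] [LinearOrder 𝕜] [IsStrictOrderedRing 𝕜]
  [AddCommGroup E] [Module 𝕜 E]

theorem exists_affine_relation_of_not_affineIndependent [Fintype ι] {p : ι → E}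
    (h : ¬AffineIndependent 𝕜 p) (v : ι → 𝕜) :
    ∃ g : ι → 𝕜, ∑ i, g i = 0 ∧ ∑ i, g i • p i = 0 ∧ (∃ i, 0 < g i) ∧
      0 ≤ ∑ i, g i * v i := by
  rw [affineIndependent_iff_of_fintype] at h
  push Not at h
  obtain ⟨g, hg, hgp, hg0⟩ := h
  rw [weightedVSub_eq_linear_combination _ hg] at hgp
  have exists_pos : ∀ g : ι → 𝕜, ∑ i, g i = 0 → (∃ i, g i ≠ 0) → ∃ i, 0 < g i :=
    fun g hg ⟨i, hi⟩ => by
      simpa using exists_pos_of_sum_zero_of_exists_nonzero g hg ⟨i, mem_univ i, hi⟩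
  rcases le_total 0 (∑ i, g i * v i) with hgv | hgv
  · exact ⟨g, hg, hgp, exists_pos g hg hg0, hgv⟩
  · refine ⟨-g, by simp [hg], by simp [hgp], exists_pos _ (by simp [hg]) (by simpa using hg0), ?_⟩
    simpa using hgv

theorem exists_sub_mul_nonneg_and_eq_zero [Fintype ι] {w g : ι → 𝕜} (hw : ∀ i, 0 ≤ w i)
    (hg : ∃ i, 0 < g i) :
    ∃ t : 𝕜, 0 ≤ t ∧ (∀ i, 0 ≤ w i - t * g i) ∧ ∃ i₀, w i₀ - t * g i₀ = 0 := by
  obtain ⟨i₀, hi₀, hmin⟩ := exists_min_image {i | 0 < g i} (fun i => w i / g i)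
    (by simpa [Finset.Nonempty] using hg)
  have hgi₀ : 0 < g i₀ := (mem_filter.1 hi₀).2
  refine ⟨w i₀ / g i₀, div_nonneg (hw i₀) hgi₀.le, fun i => ?_, i₀, by field_simp; ring⟩
  rcases le_or_gt (g i) 0 with hgi | hgi
  · linarith [mul_nonpos_of_nonneg_of_nonpos (div_nonneg (hw i₀) hgi₀.le) hgi, hw i]
  · have := hmin i (mem_filter.2 ⟨mem_univ _, hgi⟩)
    rw [le_div_iff₀ hgi] at this
    linarith

theorem exists_reweight_eq_zero_of_not_affineIndependent [Fintype ι] {p : ι → E}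
    (h : ¬AffineIndependent 𝕜 p) (v w : ι → 𝕜) (hw : ∀ i, 0 ≤ w i) :
    ∃ (w' : ι → 𝕜) (i₀ : ι), (∀ i, 0 ≤ w' i) ∧ w' i₀ = 0 ∧ ∑ i, w' i = ∑ i, w i ∧
      ∑ i, w' i • p i = ∑ i, w i • p i ∧ ∑ i, w' i * v i ≤ ∑ i, w i * v i := by
  obtain ⟨g, hg, hgp, hg_pos, hgv⟩ := exists_affine_relation_of_not_affineIndependent h v
  obtain ⟨t, ht, hnonneg, i₀, hi₀⟩ := exists_sub_mul_nonneg_and_eq_zero hw hg_pos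
  refine ⟨fun i => w i - t * g i, i₀, hnonneg, hi₀, ?_, ?_, ?_⟩
  · simp [sum_sub_distrib, ← mul_sum, hg]
  · simp [sub_smul, sum_sub_distrib, mul_smul, ← smul_sum, hgp]
  · simp only [sub_mul, sum_sub_distrib, mul_assoc, ← mul_sum]
    exact sub_le_self _ (mul_nonneg ht hgv)

theorem exists_fin_succ_combination_le [FiniteDimensional 𝕜 E] {n : ℕ} (hn : finrank 𝕜 E ≤ n) :
    ∀ {m : ℕ} (p : Fin m → E) (v w : Fin m → 𝕜), (∀ i, 0 ≤ w i) → ∑ i, w i = 1 →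
      ∃ (σ : Fin (n + 1) → Fin m) (μ : Fin (n + 1) → 𝕜), (∀ j, 0 ≤ μ j) ∧ ∑ j, μ j = 1 ∧
        ∑ j, μ j • p (σ j) = ∑ i, w i • p i ∧ ∑ j, μ j * v (σ j) ≤ ∑ i, w i * v i := by
  intro m
  induction m with
  | zero => intro p v w _ hw1; simp at hw1
  | succ m ih =>
    intro p v w hw hw1
    by_cases hm : m + 1 ≤ n + 1
    · have he := Fin.castLE_injective hm
      refine ⟨Function.invFun (Fin.castLE hm), Function.extend (Fin.castLE hm) w 0,
        Function.extend_nonneg hw le_rfl, ?_, sum_extend_smul_invFun he w p, ?_⟩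
      · simpa [hw1] using sum_extend_smul_invFun he w (fun _ => (1 : 𝕜))
      · simpa using (sum_extend_smul_invFun he w v).le
    · have hdep : ¬AffineIndependent 𝕜 p := fun hp => by
        have := hp.card_le_finrank_succ_of_finiteDimensional
        simp only [Fintype.card_fin] at this
        omega
      obtain ⟨w', i₀, hw', hw'i₀, hw'1, hw'p, hw'v⟩ :=
        exists_reweight_eq_zero_of_not_affineIndependent hdep v w hw
      obtain ⟨σ, μ, hμ, hμ1, hμp, hμv⟩ := ih (p ∘ i₀.succAbove) (v ∘ i₀.succAbove)
        (w' ∘ i₀.succAbove) (fun i => hw' _)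
        ((Fin.sum_univ_succAbove_of_eq_zero hw'i₀).trans (hw'1.trans hw1))
      refine ⟨i₀.succAbove ∘ σ, μ, hμ, hμ1, ?_, ?_⟩
      · exact hμp.trans ((Fin.sum_univ_succAbove_of_eq_zero (by simp [hw'i₀])).trans hw'p)
      · exact hμv.trans ((Fin.sum_univ_succAbove_of_eq_zero (by simp [hw'i₀])).trans_le hw'v)

theorem caratheodory_function_values_general (d m : ℕ)
    (S : Set (EuclideanSpace ℝ (Fin d)))
    (f : EuclideanSpace ℝ (Fin d) → ℝ)
    (x : EuclideanSpace ℝ (Fin d))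
    (p : Fin m → EuclideanSpace ℝ (Fin d)) (hp : ∀ i, p i ∈ S)
    (l : Fin m → ℝ) (hl : ∀ i, 0 ≤ l i) (hl1 : ∑ i, l i = 1)
    (hx : ∑ i, l i • p i = x)
    (c : ℝ) (hval : ∑ i, l i * f (p i) < c) :
    ∃ (q : Fin (d + 1) → EuclideanSpace ℝ (Fin d)) (μ : Fin (d + 1) → ℝ),
      (∀ j, q j ∈ S) ∧ (∀ j, 0 ≤ μ j) ∧ (∑ j, μ j = 1) ∧
      (∑ j, μ j • q j = x) ∧
      (∑ j, μ j * f (q j) ≤ ∑ i, l i * f (p i)) ∧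
      (∑ j, μ j * f (q j) < c) := by
  obtain ⟨σ, μ, hμ, hμ1, hμp, hμv⟩ :=
    exists_fin_succ_combination_le (finrank_euclideanSpace_fin (𝕜 := ℝ)).le p (f ∘ p) l hl hl1
  exact ⟨p ∘ σ, μ, fun j => hp (σ j), hμ, hμ1, hμp.trans hx, hμv, hμv.trans_lt hval⟩

theorem caratheodory_function_values (d m : ℕ)
    (S : Set (EuclideanSpace ℝ (Fin d))) (hS : S.Finite)
    (f : EuclideanSpace ℝ (Fin d) → ℝ)
    (x : EuclideanSpace ℝ (Fin d))
    (p : Fin m → EuclideanSpace ℝ (Fin d)) (hp : ∀ i, p i ∈ S)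
    (l : Fin m → ℝ) (hl : ∀ i, 0 ≤ l i) (hl1 : ∑ i, l i = 1)
    (hx : ∑ i, l i • p i = x)
    (c : ℝ) (hval : ∑ i, l i * f (p i) < c) :
    ∃ (q : Fin (d + 1) → EuclideanSpace ℝ (Fin d)) (μ : Fin (d + 1) → ℝ),
      (∀ j, q j ∈ S) ∧ (∀ j, 0 ≤ μ j) ∧ (∑ j, μ j = 1) ∧
      (∑ j, μ j • q j = x) ∧
      (∑ j, μ j * f (q j) ≤ ∑ i, l i * f (p i)) ∧
      (∑ j, μ j * f (q j) < c) :=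
  caratheodory_function_values_general d m S f x p hp l hl hl1 hx c hval
end
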